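/- arXiv:2604.04206 — 10 statements merged into one kernel-verified Lean document; each statement's English description precedes it below -/
import Mathlib

section
/- Let E be a finite-dimensional real inner product space and T : E → E a normal linear map. Then for every x ∈ E and every k ∈ ℕ, the function θ ↦ ‖T_θ^k x‖ is convex on ℝ, where T_θ^k denotes the k-fold composition of T_θ with itself. -/
private lemma seq_P (k : ℕ) (c : ℕ → ℝ) (hc0 : ∀ i, 0 ≤ c i)
    (hlc : ∀ i, i + 2 ≤ k → c (i+1)^2 ≤ c i * c (i+2)) :
    ∀ i j, i ≤ j → j + 1 ≤ k → c (i+1) * c j ≤ c i * c (j+1) := by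
  intro i j hij
  induction j, hij using Nat.le_induction with
  | base => intro _; exact le_of_eq (mul_comm _ _)
  | succ j hij ih =>
    intro hjk
    have H := hlc j (by omega)
    have ihj := ih (by omega)
    rcases eq_or_lt_of_le (hc0 j) with h0 | h0
    · have hz : c (j+1) = 0 := by nlinarith [hc0 (j+1), hc0 (j+2), sq_nonneg (c (j+1))]
      rw [hz, mul_zero]
      exact mul_nonneg (hc0 i) (hc0 (j+2))
    · have key : (c (i+1) * c (j+1)) * c j ≤ (c i * c (j+2)) * c j := by
        nlinarith [mul_le_mul_of_nonneg_right ihj (hc0 (j+1)), mul_le_mul_of_nonneg_left H (hc0 i)]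
      exact le_of_mul_le_mul_right key h0

private lemma seq_T (k : ℕ) (c : ℕ → ℝ) (hc0 : ∀ i, 0 ≤ c i)
    (hlc : ∀ i, i + 2 ≤ k → c (i+1)^2 ≤ c i * c (i+2)) :
    ∀ j m, 1 ≤ m → j + m ≤ k → c (j+1) ^ m ≤ c j ^ (m-1) * c (j+m) := by
  intro j m hm
  induction m, hm using Nat.le_induction with
  | base => intro _; simp
  | succ m hm ih =>
    intro hjk
    have ihm := ih (by omega)
    have hP := seq_P k c hc0 hlc j (j+m) (by omega) (by omega)
    calc c (j+1) ^ (m+1) = c (j+1) ^ m * c (j+1) := by ring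
      _ ≤ (c j ^ (m-1) * c (j+m)) * c (j+1) :=
          mul_le_mul_of_nonneg_right ihm (hc0 _)
      _ = c j ^ (m-1) * (c (j+1) * c (j+m)) := by ring
      _ ≤ c j ^ (m-1) * (c j * c (j+m+1)) :=
          mul_le_mul_of_nonneg_left hP (pow_nonneg (hc0 _) _)
      _ = c j ^ (m-1) * c j * c (j+m+1) := by ring
      _ = c j ^ (m+1-1) * c (j+(m+1)) := by
          rw [← pow_succ]
          congr 2 <;> omega

private lemma seq_M (k : ℕ) (c : ℕ → ℝ) (hc0 : ∀ i, 0 ≤ c i)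
    (hlc : ∀ i, i + 2 ≤ k → c (i+1)^2 ≤ c i * c (i+2)) :
    ∀ j, j ≤ k → c j ^ k ≤ c 0 ^ (k - j) * c k ^ j := by
  intro j
  induction j with
  | zero => intro _; simp
  | succ j ih =>
    intro hjk
    have ihj := ih (by omega)
    obtain ⟨d, hd⟩ : ∃ d, k = j + 1 + d := ⟨k - (j+1), by omega⟩
    have hT := seq_T k c hc0 hlc j (d+1) (by omega) (by omega)
    have hjd1 : j + (d+1) = k := by omega
    rw [hjd1] at hT
    have hdsub : d + 1 - 1 = d := by omega
    rw [hdsub] at hT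
    have hkj : k - j = d + 1 := by omega
    have hkj1 : k - (j+1) = d := by omega
    rw [hkj] at ihj
    rw [hkj1]
    have key : (c (j+1) ^ k) ^ (d+1) ≤ (c 0 ^ d * c k ^ (j+1)) ^ (d+1) := by
      have h1 : (c (j+1) ^ (d+1)) ^ k ≤ (c j ^ d * c k) ^ k :=
        pow_le_pow_left₀ (pow_nonneg (hc0 _) _) hT k
      have h2 : (c j ^ k) ^ d ≤ (c 0 ^ (d+1) * c k ^ j) ^ d :=
        pow_le_pow_left₀ (pow_nonneg (hc0 _) _) ihj d
      calc (c (j+1) ^ k) ^ (d+1) = (c (j+1) ^ (d+1)) ^ k := by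
            rw [← pow_mul, ← pow_mul, Nat.mul_comm]
        _ ≤ (c j ^ d * c k) ^ k := h1
        _ = (c j ^ k) ^ d * c k ^ k := by
            rw [mul_pow, ← pow_mul, ← pow_mul, Nat.mul_comm]
        _ ≤ (c 0 ^ (d+1) * c k ^ j) ^ d * c k ^ k :=
            mul_le_mul_of_nonneg_right h2 (pow_nonneg (hc0 _) _)
        _ = (c 0 ^ d * c k ^ (j+1)) ^ (d+1) := by
            subst hd; ring
    exact (pow_le_pow_iff_left₀ (pow_nonneg (hc0 _) _)
      (mul_nonneg (pow_nonneg (hc0 _) _) (pow_nonneg (hc0 _) _)) (Nat.succ_ne_zero d)).mp key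

open LinearMap in
private lemma aux_norm_adjoint {E : Type*} [NormedAddCommGroup E] [InnerProductSpace ℝ E]
    [FiniteDimensional ℝ E] (A : E →ₗ[ℝ] E)
    (hA : adjoint A * A = A * adjoint A) (w : E) :
    ‖adjoint A w‖ = ‖A w‖ := by
  have h : inner ℝ (adjoint A w) (adjoint A w) = inner ℝ (A w) (A w) := by
    rw [adjoint_inner_left, ← adjoint_inner_right]
    have e : A (adjoint A w) = adjoint A (A w) := by
      rw [← Module.End.mul_apply, ← hA, Module.End.mul_apply]
    rw [e]
  rw [real_inner_self_eq_norm_sq, real_inner_self_eq_norm_sq] at h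
  calc ‖adjoint A w‖ = Real.sqrt (‖adjoint A w‖ ^ 2) := (Real.sqrt_sq (norm_nonneg _)).symm
    _ = Real.sqrt (‖A w‖ ^ 2) := by rw [h]
    _ = ‖A w‖ := Real.sqrt_sq (norm_nonneg _)

open LinearMap in
private lemma aux_step {E : Type*} [NormedAddCommGroup E] [InnerProductSpace ℝ E]
    [FiniteDimensional ℝ E] (A B : E →ₗ[ℝ] E)
    (hA : adjoint A * A = A * adjoint A)
    (hB : adjoint B * B = B * adjoint B)
    (hc : (adjoint A * A) * B = B * (adjoint A * A)) (v : E) :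
    ‖A (B v)‖ ^ 2 ≤ ‖A (A v)‖ * ‖B (B v)‖ := by
  have key : inner ℝ (A (B v)) (A (B v)) = inner ℝ ((adjoint A * A) v) (adjoint B (B v)) := by
    rw [← adjoint_inner_right]
    have e1 : adjoint A (A (B v)) = B ((adjoint A * A) v) := by
      rw [← Module.End.mul_apply, ← Module.End.mul_apply, hc, Module.End.mul_apply]
    rw [e1, ← adjoint_inner_left]
    exact real_inner_comm _ _
  have hcs : inner ℝ ((adjoint A * A) v) (adjoint B (B v))
      ≤ ‖(adjoint A * A) v‖ * ‖adjoint B (B v)‖ := real_inner_le_norm _ _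
  have e2 : ‖(adjoint A * A) v‖ = ‖A (A v)‖ := by
    rw [Module.End.mul_apply]
    exact aux_norm_adjoint A hA (A v)
  have e3 : ‖adjoint B (B v)‖ = ‖B (B v)‖ := aux_norm_adjoint B hB (B v)
  calc ‖A (B v)‖ ^ 2 = inner ℝ (A (B v)) (A (B v)) := (real_inner_self_eq_norm_sq _).symm
    _ = inner ℝ ((adjoint A * A) v) (adjoint B (B v)) := key
    _ ≤ ‖(adjoint A * A) v‖ * ‖adjoint B (B v)‖ := hcs
    _ = ‖A (A v)‖ * ‖B (B v)‖ := by rw [e2, e3]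

private lemma aux_comm2 {R : Type*} [Ring R] [Algebra ℝ R] {x y : R} (h : Commute x y)
    (r t r' t' : ℝ) : Commute (r • x + t • 1) (r' • y + t' • 1) :=
  Commute.add_left (Commute.add_right ((h.smul_left r).smul_right r')
      (((Commute.one_right x).smul_left r).smul_right t'))
    (Commute.add_right (((Commute.one_left y).smul_left t).smul_right r')
      (((Commute.one_right (1:R)).smul_left t).smul_right t'))

open LinearMap in
private lemma aux_adjoint {E : Type*} [NormedAddCommGroup E] [InnerProductSpace ℝ E]
    [FiniteDimensional ℝ E] (T : E →ₗ[ℝ] E) (r s : ℝ) :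
    adjoint (r • T + s • LinearMap.id) = r • adjoint T + s • LinearMap.id := by
  symm
  rw [LinearMap.eq_adjoint_iff]
  intro x y
  simp [inner_add_left, inner_add_right, inner_smul_left, inner_smul_right,
    LinearMap.adjoint_inner_left]

/-- If `T` is a normal linear map on a finite-dimensional real inner
product space, then for every `x` and `k`, the function `θ ↦ ‖T_θ^k x‖` is convex on `ℝ`,
where `T_θ = θ • T + (1 - θ) • id` and `T_θ^k` is the `k`-fold composition. -/
theorem convexOn_norm_pow_relaxation {E : Type*} [NormedAddCommGroup E]
    [InnerProductSpace ℝ E] [FiniteDimensional ℝ E] (T : E →ₗ[ℝ] E)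
    (hT : LinearMap.adjoint T ∘ₗ T = T ∘ₗ LinearMap.adjoint T) (x : E) (k : ℕ) :
    ConvexOn ℝ Set.univ
      (fun θ : ℝ => ‖(((θ • T + (1 - θ) • LinearMap.id : E →ₗ[ℝ] E)) ^ k) x‖) := by
  rcases eq_or_ne k 0 with rfl | hk
  · simpa using convexOn_const ‖x‖ convex_univ
  have hT' : LinearMap.adjoint T * T = T * LinearMap.adjoint T := hT
  have hTT : Commute (LinearMap.adjoint T) T := hT'
  constructor
  · exact convex_univ
  rintro a - b - lam mu hlam hmu hlm
  simp only [smul_eq_mul]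
  set A : E →ₗ[ℝ] E := a • T + (1-a) • LinearMap.id with hAdef
  set B : E →ₗ[ℝ] E := b • T + (1-b) • LinearMap.id with hBdef
  have hAB : Commute A B := by
    rw [hAdef, hBdef]; exact aux_comm2 (Commute.refl T) a (1-a) b (1-b)
  have hadjA : LinearMap.adjoint A = a • LinearMap.adjoint T + (1-a) • LinearMap.id := by
    rw [hAdef]; exact aux_adjoint T a (1-a)
  have hadjB : LinearMap.adjoint B = b • LinearMap.adjoint T + (1-b) • LinearMap.id := by
    rw [hBdef]; exact aux_adjoint T b (1-b)
  have hA' : LinearMap.adjoint A * A = A * LinearMap.adjoint A := by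
    rw [hadjA, hAdef]; exact (aux_comm2 hTT a (1-a) a (1-a)).eq
  have hB' : LinearMap.adjoint B * B = B * LinearMap.adjoint B := by
    rw [hadjB, hBdef]; exact (aux_comm2 hTT b (1-b) b (1-b)).eq
  have hcA : (LinearMap.adjoint A * A) * B = B * (LinearMap.adjoint A * A) := by
    have h1 : Commute (LinearMap.adjoint A) B := by
      rw [hadjA, hBdef]; exact aux_comm2 hTT a (1-a) b (1-b)
    exact (Commute.mul_left h1 hAB).eq
  -- the sequence
  set c : ℕ → ℝ := fun i => ‖((A ^ i) * (B ^ (k - i))) x‖ with hcdef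
  have hc0 : ∀ i, 0 ≤ c i := fun i => norm_nonneg _
  have swapB : ∀ p q : ℕ, B * (A^p * B^q) = A^p * B^(q+1) := by
    intro p q
    rw [← mul_assoc, ((hAB.symm).pow_right p).eq, mul_assoc, ← pow_succ']
  have swapA : ∀ p q : ℕ, A * (A^p * B^q) = A^(p+1) * B^q := by
    intro p q
    rw [← mul_assoc, ← pow_succ']
  have hlc : ∀ i, i + 2 ≤ k → c (i+1)^2 ≤ c i * c (i+2) := by
    intro i hi
    have k1 : k - (i+1) = (k-(i+2)) + 1 := by omega
    have k2 : k - i = (k-(i+2)) + 2 := by omega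
    set v : E := ((A^i * B^(k-(i+2)))) x with hvdef
    have E1 : c (i+1) = ‖A (B v)‖ := by
      have e : A * (B * (A^i * B^(k-(i+2)))) = A^(i+1) * B^(k-(i+1)) := by
        rw [swapB, swapA, k1]
      rw [hcdef]
      simp only
      rw [← e, Module.End.mul_apply, Module.End.mul_apply]
    have E2 : c i = ‖B (B v)‖ := by
      have e : B * (B * (A^i * B^(k-(i+2)))) = A^i * B^(k-i) := by
        rw [swapB, swapB, k2]
      rw [hcdef]
      simp only
      rw [← e, Module.End.mul_apply, Module.End.mul_apply]
    have E3 : c (i+2) = ‖A (A v)‖ := by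
      have e : A * (A * (A^i * B^(k-(i+2)))) = A^(i+2) * B^(k-(i+2)) := by
        rw [swapA, swapA]
      rw [hcdef]
      simp only
      rw [← e, Module.End.mul_apply, Module.End.mul_apply]
    rw [E1, E2, E3, mul_comm]
    exact aux_step A B hA' hB' hcA v
  -- the combination
  have hSAB : (lam * a + mu * b) • T + (1 - (lam * a + mu * b)) • LinearMap.id
      = lam • A + mu • B := by
    rw [hAdef, hBdef]
    match_scalars
    · ring
    · linear_combination -hlm
  rw [hSAB]
  set α := ‖(A^k) x‖ with hαdef
  set β := ‖(B^k) x‖ with hβdef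
  have hck : c k = α := by
    rw [hcdef, hαdef]; simp
  have hc00 : c 0 = β := by
    rw [hcdef, hβdef]; simp
  set u : ℝ := α ^ ((k:ℝ))⁻¹ with hudef
  set w : ℝ := β ^ ((k:ℝ))⁻¹ with hwdef
  have hα0 : 0 ≤ α := norm_nonneg _
  have hβ0 : 0 ≤ β := norm_nonneg _
  have hu : 0 ≤ u := Real.rpow_nonneg hα0 _
  have hw : 0 ≤ w := Real.rpow_nonneg hβ0 _
  have huk : u ^ k = α := Real.rpow_inv_natCast_pow hα0 hk
  have hwk : w ^ k = β := Real.rpow_inv_natCast_pow hβ0 hk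
  have hcm : ∀ m, m ≤ k → c m ≤ u^m * w^(k-m) := by
    intro m hm
    have hM := seq_M k c hc0 hlc m hm
    rw [hck, hc00] at hM
    have hpow : (u^m * w^(k-m))^k = β^(k-m) * α^m := by
      rw [mul_pow, ← pow_mul, ← pow_mul, mul_comm m k, mul_comm (k-m) k, pow_mul, pow_mul,
        huk, hwk, mul_comm]
    refine (pow_le_pow_iff_left₀ (hc0 m)
      (mul_nonneg (pow_nonneg hu m) (pow_nonneg hw _)) hk).mp ?_
    rw [hpow]; exact hM
  have hCsm : Commute (lam • A) (mu • B) := (hAB.smul_left lam).smul_right mu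
  calc ‖((lam • A + mu • B)^k) x‖
      = ‖∑ m ∈ Finset.range (k+1),
          (((lam•A)^m * (mu•B)^(k-m) * (k.choose m : E →ₗ[ℝ] E)) x)‖ := by
        rw [hCsm.add_pow]
        rw [LinearMap.coe_sum, Finset.sum_apply]
    _ ≤ ∑ m ∈ Finset.range (k+1),
          ‖((lam•A)^m * (mu•B)^(k-m) * (k.choose m : E →ₗ[ℝ] E)) x‖ := norm_sum_le _ _
    _ = ∑ m ∈ Finset.range (k+1), (k.choose m : ℝ) * (lam^m * mu^(k-m)) * c m := by
        refine Finset.sum_congr rfl fun m _ => ?_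
        have e : ((lam•A)^m * (mu•B)^(k-m) * (k.choose m : E →ₗ[ℝ] E)) x
            = ((k.choose m : ℝ) * (lam^m * mu^(k-m))) • ((A^m * B^(k-m)) x) := by
          simp only [smul_pow, Module.End.mul_apply, LinearMap.smul_apply,
            Module.End.natCast_apply, map_smul, ← Nat.cast_smul_eq_nsmul ℝ, map_nsmul,
            smul_smul]
          ring_nf
        rw [e, norm_smul, Real.norm_eq_abs, abs_of_nonneg]
        exact mul_nonneg (Nat.cast_nonneg _) (mul_nonneg (pow_nonneg hlam m) (pow_nonneg hmu _))
    _ ≤ ∑ m ∈ Finset.range (k+1), (k.choose m : ℝ) * ((lam*u)^m * (mu*w)^(k-m)) := by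
        refine Finset.sum_le_sum fun m hm => ?_
        have hmk : m ≤ k := Nat.lt_succ_iff.mp (Finset.mem_range.mp hm)
        have h1 := hcm m hmk
        have hfac : (0:ℝ) ≤ (k.choose m : ℝ) * (lam^m * mu^(k-m)) :=
          mul_nonneg (Nat.cast_nonneg _) (mul_nonneg (pow_nonneg hlam m) (pow_nonneg hmu _))
        calc (k.choose m : ℝ) * (lam^m * mu^(k-m)) * c m
            ≤ (k.choose m : ℝ) * (lam^m * mu^(k-m)) * (u^m * w^(k-m)) :=
              mul_le_mul_of_nonneg_left h1 hfac
          _ = (k.choose m : ℝ) * ((lam*u)^m * (mu*w)^(k-m)) := by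
              rw [mul_pow, mul_pow]; ring
    _ = (lam * u + mu * w)^k := by
        rw [add_pow]
        exact Finset.sum_congr rfl fun m _ => by ring
    _ ≤ lam * u^k + mu * w^k := by
        have h := (convexOn_pow k).2 (Set.mem_Ici.mpr hu) (Set.mem_Ici.mpr hw) hlam hmu hlm
        simpa [smul_eq_mul] using h
    _ = lam * α + mu * β := by rw [huk, hwk]
end

section
/- Let E be a finite-dimensional real inner product space and T : E → E an iso-averaged linear map. Then T is normal, i.e. T* ∘ T = T ∘ T*. -/
/-- Every iso-averaged linear map on a finite-dimensional real inner
product space is normal. -/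
theorem isoAveraged_normal {E : Type*} [NormedAddCommGroup E]
    [InnerProductSpace ℝ E] [FiniteDimensional ℝ E] (T : E →ₗ[ℝ] E)
    (hiso : (2 : ℝ) • (LinearMap.adjoint T ∘ₗ T) = T + LinearMap.adjoint T) :
    LinearMap.adjoint T ∘ₗ T = T ∘ₗ LinearMap.adjoint T := by
  set S := LinearMap.adjoint T with hS
  set U : E →ₗ[ℝ] E := (2 : ℝ) • T - 1 with hU
  have hadj : LinearMap.adjoint U = (2 : ℝ) • S - 1 := by
    rw [hU, map_sub, map_smulₛₗ]
    rw [← LinearMap.star_eq_adjoint (1 : E →ₗ[ℝ] E), star_one]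
    simp [hS]
  have hST : (2 : ℝ) • (S * T) = T + S := hiso
  set V := LinearMap.adjoint U with hV
  have hT2 : (2:ℝ) • T = U + 1 := by rw [hU]; abel
  have hS2 : (2:ℝ) • S = V + 1 := by rw [hadj]; abel
  have h1 : V * U = 1 := by
    rw [hadj, hU]
    rw [sub_mul, mul_sub, mul_sub, smul_mul_assoc, mul_smul_comm, smul_smul,
      one_mul, mul_one]
    rw [show (2 : ℝ) * 2 = 2 + 2 by norm_num, add_smul, hST]
    simp only [one_mul, mul_one]
    module
  have h2 : U * V = 1 := mul_eq_one_comm.mp h1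
  clear_value U V
  clear hU hV hadj
  have key : (4 : ℝ) • (S * T) = (4 : ℝ) • (T * S) := by
    have e1 : ((2:ℝ) • S) * ((2:ℝ) • T) = (4:ℝ) • (S * T) := by
      rw [smul_mul_assoc, mul_smul_comm, smul_smul]; norm_num
    have e2 : ((2:ℝ) • T) * ((2:ℝ) • S) = (4:ℝ) • (T * S) := by
      rw [smul_mul_assoc, mul_smul_comm, smul_smul]; norm_num
    rw [← e1, ← e2, hT2, hS2, add_mul, mul_add, mul_add, add_mul, mul_add, mul_add,
      h1, h2]
    simp only [one_mul, mul_one]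
    abel
  exact smul_right_injective (E →ₗ[ℝ] E) (by norm_num : (4:ℝ) ≠ 0) key
end

section
/- Let E be a finite-dimensional real inner product space and T : E → E a linear map. Then T is iso-averaged if and only if for every x ∈ E the function θ ↦ ‖T_θ x‖ is symmetric with respect to θ = 1, i.e. ‖T_θ x‖ = ‖T_{2−θ} x‖ for all θ ∈ ℝ and all x ∈ E. -/
/-- A linear map `T` on a finite-dimensional real inner product space is
iso-averaged if and only if `θ ↦ ‖T_θ x‖` is symmetric with respect to `θ = 1` for every
`x`, i.e. `‖T_θ x‖ = ‖T_{2-θ} x‖` for all `θ ∈ ℝ` and `x ∈ E`. -/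
theorem isoAveraged_iff_norm_relaxation_symmetric {E : Type*} [NormedAddCommGroup E]
    [InnerProductSpace ℝ E] [FiniteDimensional ℝ E] (T : E →ₗ[ℝ] E) :
    ((2 : ℝ) • (LinearMap.adjoint T ∘ₗ T) = T + LinearMap.adjoint T) ↔
      ∀ (θ : ℝ) (x : E),
        ‖(θ • T + (1 - θ) • LinearMap.id : E →ₗ[ℝ] E) x‖ =
          ‖((2 - θ) • T + (1 - (2 - θ)) • LinearMap.id : E →ₗ[ℝ] E) x‖ := by
  have key : ((2 : ℝ) • (LinearMap.adjoint T ∘ₗ T) = T + LinearMap.adjoint T) ↔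
      ∀ x : E, (inner ℝ (T x) (T x) : ℝ) = inner ℝ (T x) x := by
    constructor
    · intro h x
      have := congrArg (fun S : E →ₗ[ℝ] E => (inner ℝ (S x) x : ℝ)) h
      simp only [LinearMap.smul_apply, LinearMap.add_apply, LinearMap.comp_apply,
        inner_smul_left, LinearMap.adjoint_inner_left, inner_add_left] at this
      have h2 : (inner ℝ x (T x) : ℝ) = inner ℝ (T x) x := real_inner_comm _ _
      rw [h2] at this
      simp only [RCLike.star_def, starRingEnd_apply, star_trivial] at this
      linarith
    · intro h
      have hsym : (((2 : ℝ) • (LinearMap.adjoint T ∘ₗ T)) -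
          (T + LinearMap.adjoint T)).IsSymmetric := by
        intro x y
        simp only [LinearMap.sub_apply, LinearMap.smul_apply, LinearMap.add_apply,
          LinearMap.comp_apply, inner_sub_left, inner_sub_right, inner_smul_left,
          inner_smul_right, inner_add_left, inner_add_right,
          LinearMap.adjoint_inner_left, LinearMap.adjoint_inner_right]
        have := real_inner_comm (T x) y
        have := real_inner_comm x (T y)
        simp only [RCLike.star_def, starRingEnd_apply, star_trivial]
        linarith [real_inner_comm (T x) (T y)]
      have hz : ∀ x : E, (inner ℝ ((((2 : ℝ) • (LinearMap.adjoint T ∘ₗ T)) -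
          (T + LinearMap.adjoint T)) x) x : ℝ) = 0 := by
        intro x
        simp only [LinearMap.sub_apply, LinearMap.smul_apply, LinearMap.add_apply,
          LinearMap.comp_apply, inner_sub_left, inner_smul_left, inner_add_left,
          LinearMap.adjoint_inner_left]
        have h2 : (inner ℝ x (T x) : ℝ) = inner ℝ (T x) x := real_inner_comm _ _
        have := h x
        simp only [RCLike.star_def, starRingEnd_apply, star_trivial]
        linarith
      have := hsym.inner_map_self_eq_zero.mp hz
      rw [sub_eq_zero] at this
      exact this
  rw [key]
  constructor
  · intro h θ x
    have hsq : (inner ℝ ((θ • T + (1 - θ) • LinearMap.id : E →ₗ[ℝ] E) x)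
        ((θ • T + (1 - θ) • LinearMap.id : E →ₗ[ℝ] E) x) : ℝ) =
        inner ℝ (((2 - θ) • T + (1 - (2 - θ)) • LinearMap.id : E →ₗ[ℝ] E) x)
        (((2 - θ) • T + (1 - (2 - θ)) • LinearMap.id : E →ₗ[ℝ] E) x) := by
      simp only [LinearMap.add_apply, LinearMap.smul_apply, LinearMap.id_apply,
        inner_add_add_self, inner_smul_left, inner_smul_right,
        RCLike.star_def, starRingEnd_apply, star_trivial]
      have h1 := h x
      have h2 : (inner ℝ x (T x) : ℝ) = inner ℝ (T x) x := real_inner_comm _ _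
      linear_combination (θ^2 - (2-θ)^2) * h1 + (θ*(1-θ) - (2-θ)*(θ-1)) * h2
    have e1 := real_inner_self_eq_norm_sq ((θ • T + (1 - θ) • LinearMap.id : E →ₗ[ℝ] E) x)
    have e2 := real_inner_self_eq_norm_sq
      (((2 - θ) • T + (1 - (2 - θ)) • LinearMap.id : E →ₗ[ℝ] E) x)
    rw [e1, e2] at hsq
    calc ‖(θ • T + (1 - θ) • LinearMap.id : E →ₗ[ℝ] E) x‖
        = Real.sqrt (‖(θ • T + (1 - θ) • LinearMap.id : E →ₗ[ℝ] E) x‖ ^ 2) :=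
          (Real.sqrt_sq (norm_nonneg _)).symm
      _ = Real.sqrt (‖((2 - θ) • T + (1 - (2 - θ)) • LinearMap.id : E →ₗ[ℝ] E) x‖ ^ 2) := by
          rw [hsq]
      _ = ‖((2 - θ) • T + (1 - (2 - θ)) • LinearMap.id : E →ₗ[ℝ] E) x‖ :=
          Real.sqrt_sq (norm_nonneg _)
  · intro h x
    have := h 2 x
    have hsq : (inner ℝ (((2:ℝ) • T + (1 - 2:ℝ) • LinearMap.id : E →ₗ[ℝ] E) x)
        (((2:ℝ) • T + (1 - 2:ℝ) • LinearMap.id : E →ₗ[ℝ] E) x) : ℝ) =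
        inner ℝ (((2 - 2:ℝ) • T + (1 - (2 - 2:ℝ)) • LinearMap.id : E →ₗ[ℝ] E) x)
        (((2 - 2:ℝ) • T + (1 - (2 - 2:ℝ)) • LinearMap.id : E →ₗ[ℝ] E) x) := by
      rw [real_inner_self_eq_norm_sq, real_inner_self_eq_norm_sq, this]
    simp only [LinearMap.add_apply, LinearMap.smul_apply, LinearMap.id_apply,
      inner_add_add_self, inner_smul_left, inner_smul_right,
      RCLike.star_def, starRingEnd_apply, star_trivial] at hsq
    nlinarith [real_inner_comm x (T x)]
end

section
/- Let E be a finite-dimensional real inner product space and T : E → E a linear map. Then T is iso-averaged if and only if for every k ≥ 1, every x ∈ E and every θ ∈ ℝ one has ‖T_θ^k x‖ = ‖T_{2−θ}^k x‖, where T_θ^k denotes the k-fold composition of T_θ with itself. -/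
open LinearMap

section Aux

variable {E : Type*} [NormedAddCommGroup E] [InnerProductSpace ℝ E] [FiniteDimensional ℝ E]

local notation "⟪" x ", " y "⟫" => @inner ℝ _ _ x y

private lemma aux_adjoint_one : LinearMap.adjoint (1 : E →ₗ[ℝ] E) = 1 := by
  rw [← LinearMap.star_eq_adjoint, star_one]

private lemma aux_norm_sq (A : E →ₗ[ℝ] E) (x : E) :
    ‖A x‖ ^ 2 = ⟪(LinearMap.adjoint A * A) x, x⟫ := by
  simp [Module.End.mul_apply, LinearMap.adjoint_inner_left, real_inner_self_eq_norm_sq]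

private lemma aux_isometry {Q : E →ₗ[ℝ] E} (hQ : LinearMap.adjoint Q * Q = 1) (x : E) :
    ‖Q x‖ = ‖x‖ := by
  have h := aux_norm_sq Q x
  rw [hQ] at h
  simp only [Module.End.one_apply, real_inner_self_eq_norm_sq] at h
  exact (sq_eq_sq₀ (norm_nonneg _) (norm_nonneg _)).mp h

private lemma aux_adjoint_pow (A : E →ₗ[ℝ] E) (k : ℕ) :
    LinearMap.adjoint (A ^ k) = (LinearMap.adjoint A) ^ k := by
  induction k with
  | zero => simp [aux_adjoint_one]
  | succ n ih =>
      rw [pow_succ, Module.End.mul_eq_comp, LinearMap.adjoint_comp, ih,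
        ← Module.End.mul_eq_comp, ← pow_succ']

private lemma aux_pow_one {Q : E →ₗ[ℝ] E} (hQ : LinearMap.adjoint Q * Q = 1) (k : ℕ) :
    (LinearMap.adjoint Q) ^ k * Q ^ k = 1 := by
  induction k with
  | zero => simp
  | succ n ih =>
      calc (LinearMap.adjoint Q) ^ (n + 1) * Q ^ (n + 1)
          = (LinearMap.adjoint Q) ^ n * ((LinearMap.adjoint Q * Q) * Q ^ n) := by
            rw [pow_succ, pow_succ']; noncomm_ring
        _ = 1 := by rw [hQ, one_mul]; exact ih

private lemma aux_normal_norm {N : E →ₗ[ℝ] E}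
    (h : N * LinearMap.adjoint N = LinearMap.adjoint N * N) (x : E) :
    ‖N x‖ = ‖LinearMap.adjoint N x‖ := by
  have h1 := aux_norm_sq N x
  have h2 := aux_norm_sq (LinearMap.adjoint N) x
  rw [LinearMap.adjoint_adjoint, h] at h2
  have : ‖N x‖ ^ 2 = ‖LinearMap.adjoint N x‖ ^ 2 := h1.trans h2.symm
  exact (sq_eq_sq₀ (norm_nonneg _) (norm_nonneg _)).mp this

end Aux

/-- A linear map `T` on a finite-dimensional real inner product space is
iso-averaged if and only if for every `k ≥ 1`, every `x` and every `θ ∈ ℝ` one has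
`‖T_θ^k x‖ = ‖T_{2-θ}^k x‖`, where `T_θ^k` is the `k`-fold composition of
`T_θ := θ • T + (1 - θ) • id`. -/
theorem isoAveraged_iff_norm_pow_relaxation_symmetric {E : Type*} [NormedAddCommGroup E]
    [InnerProductSpace ℝ E] [FiniteDimensional ℝ E] (T : E →ₗ[ℝ] E) :
    ((2 : ℝ) • (LinearMap.adjoint T ∘ₗ T) = T + LinearMap.adjoint T) ↔
      ∀ (k : ℕ), 1 ≤ k → ∀ (x : E) (θ : ℝ),
        ‖((θ • T + (1 - θ) • LinearMap.id : E →ₗ[ℝ] E) ^ k) x‖ =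
          ‖(((2 - θ) • T + (1 - (2 - θ)) • LinearMap.id : E →ₗ[ℝ] E) ^ k) x‖ := by
  set Q : E →ₗ[ℝ] E := (2 : ℝ) • T - 1 with hQdef
  have hadjQ : LinearMap.adjoint Q = (2 : ℝ) • LinearMap.adjoint T - 1 := by
    rw [hQdef, map_sub, map_smulₛₗ]
    simp [aux_adjoint_one]
  have hexp : LinearMap.adjoint Q * Q =
      (4 : ℝ) • (LinearMap.adjoint T * T) - (2 : ℝ) • LinearMap.adjoint T - (2 : ℝ) • T + 1 := by
    rw [hadjQ, hQdef]
    simp only [mul_sub, sub_mul, smul_mul_assoc, mul_smul_comm, smul_smul, one_mul, mul_one]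
    module
  constructor
  · intro h k hk x θ
    have h' : (2 : ℝ) • (LinearMap.adjoint T * T) = T + LinearMap.adjoint T := h
    have hQ1 : LinearMap.adjoint Q * Q = 1 := by
      rw [hexp]
      linear_combination (norm := module) (2 : ℝ) • h'
    have hQ2 : Q * LinearMap.adjoint Q = 1 := mul_eq_one_comm.mp hQ1
    set A : E →ₗ[ℝ] E := θ • T + (1 - θ) • LinearMap.id with hAdef
    set B : E →ₗ[ℝ] E := (2 - θ) • T + (1 - (2 - θ)) • LinearMap.id with hBdef
    have hA : A = (θ / 2) • Q + (1 - θ / 2) • 1 := by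
      rw [hAdef, hQdef, Module.End.one_eq_id]
      module
    have hadjA : LinearMap.adjoint A = (θ / 2) • LinearMap.adjoint Q + (1 - θ / 2) • 1 := by
      rw [hA, map_add, map_smulₛₗ, map_smulₛₗ]
      simp [aux_adjoint_one]
    have hB : B = Q * LinearMap.adjoint A := by
      rw [hBdef, hadjA, hQdef, mul_add, mul_smul_comm, mul_smul_comm, hQ2, mul_one,
        Module.End.one_eq_id]
      module
    have hcomm : Q * LinearMap.adjoint A = LinearMap.adjoint A * Q := by
      rw [hadjA, mul_add, add_mul, mul_smul_comm, smul_mul_assoc, hQ2,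
        mul_smul_comm, smul_mul_assoc, hQ1, mul_one, one_mul]
    have hQQ : Q * LinearMap.adjoint Q = LinearMap.adjoint Q * Q := hQ2.trans hQ1.symm
    have hnormal : A * LinearMap.adjoint A = LinearMap.adjoint A * A := by
      rw [hadjA, hA]
      simp only [mul_add, add_mul, smul_mul_assoc, mul_smul_comm, one_mul, mul_one, hQQ]
      module
    -- B^k = Q^k * (adjoint A)^k
    have hcomm' : Commute Q (LinearMap.adjoint A) := hcomm
    have hBk : B ^ k = Q ^ k * (LinearMap.adjoint A) ^ k := by
      rw [hB, hcomm'.mul_pow]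
    -- isometry of Q^k
    have hQk : LinearMap.adjoint (Q ^ k) * Q ^ k = 1 := by
      rw [aux_adjoint_pow]; exact aux_pow_one hQ1 k
    have hnormalk : (A ^ k) * LinearMap.adjoint (A ^ k) =
        LinearMap.adjoint (A ^ k) * (A ^ k) := by
      rw [aux_adjoint_pow]
      have hn : Commute A (LinearMap.adjoint A) := hnormal
      exact hn.pow_pow k k
    calc ‖(A ^ k) x‖ = ‖LinearMap.adjoint (A ^ k) x‖ := aux_normal_norm hnormalk x
      _ = ‖(Q ^ k) (((LinearMap.adjoint A) ^ k) x)‖ := by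
          rw [← aux_adjoint_pow]
          exact (aux_isometry hQk _).symm
      _ = ‖(B ^ k) x‖ := by rw [hBk]; rfl
  · intro h
    have e1 : ((0 : ℝ) • T + (1 - (0 : ℝ)) • LinearMap.id : E →ₗ[ℝ] E) = 1 := by
      rw [Module.End.one_eq_id]; module
    have e2 : (((2 : ℝ) - 0) • T + (1 - ((2 : ℝ) - 0)) • LinearMap.id : E →ₗ[ℝ] E) = Q := by
      rw [hQdef, Module.End.one_eq_id]; module
    have h0 := fun x => h 1 le_rfl x 0
    simp only [e1, e2, pow_one, Module.End.one_apply] at h0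
    have hQiso : ∀ x : E, ‖Q x‖ = ‖x‖ := fun x => (h0 x).symm
    have hinner : ∀ x y : E, @inner ℝ _ _ (Q x) (Q y) = @inner ℝ _ _ x y := by
      intro x y
      rw [real_inner_eq_norm_add_mul_self_sub_norm_mul_self_sub_norm_mul_self_div_two,
        real_inner_eq_norm_add_mul_self_sub_norm_mul_self_sub_norm_mul_self_div_two x y,
        ← map_add, hQiso, hQiso, hQiso]
    have hQ1 : LinearMap.adjoint Q * Q = 1 := by
      apply LinearMap.ext
      intro x
      apply ext_inner_right ℝ
      intro y
      rw [Module.End.mul_apply, LinearMap.adjoint_inner_left, hinner, Module.End.one_apply]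
    rw [hexp] at hQ1
    have h4 : (4 : ℝ) • (LinearMap.adjoint T * T) =
        (2 : ℝ) • LinearMap.adjoint T + (2 : ℝ) • T := by
      linear_combination (norm := module) hQ1
    show (2 : ℝ) • (LinearMap.adjoint T * T) = T + LinearMap.adjoint T
    apply smul_right_injective (E →ₗ[ℝ] E) (two_ne_zero (α := ℝ))
    linear_combination (norm := module) h4
end

section
/- Let E be a finite-dimensional complex inner product space and T : E → E an iso-averaged linear map. Then every eigenvalue λ of T satisfies |λ|² = Re(λ); equivalently, |λ − 1/2| = 1/2, so all eigenvalues lie on the circle of radius 1/2 centered at 1/2. -/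
/-- Every eigenvalue `λ` of an iso-averaged linear map on a
finite-dimensional complex inner product space satisfies `|λ|² = Re λ`; equivalently
`|λ - 1/2| = 1/2`, i.e. all eigenvalues lie on the circle of radius `1/2` centered at
`1/2`. -/
theorem isoAveraged_eigenvalue_circle {E : Type*} [NormedAddCommGroup E]
    [InnerProductSpace ℂ E] [FiniteDimensional ℂ E] (T : E →ₗ[ℂ] E)
    (hiso : (2 : ℂ) • (LinearMap.adjoint T ∘ₗ T) = T + LinearMap.adjoint T) :
    ∀ l : ℂ, Module.End.HasEigenvalue T l →
      ‖l‖ ^ 2 = l.re ∧ ‖l - 1 / 2‖ = 1 / 2 := by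
  intro l hl
  obtain ⟨x, hx⟩ := hl.exists_hasEigenvector
  have hTx : T x = l • x := hx.apply_eq_smul
  have hxne : x ≠ 0 := hx.right
  have e1 : (inner ℂ x ((LinearMap.adjoint T ∘ₗ T) x) : ℂ)
      = starRingEnd ℂ l * l * inner ℂ x x := by
    rw [LinearMap.comp_apply, LinearMap.adjoint_inner_right, hTx, inner_smul_left,
      inner_smul_right]; ring
  have e2 : (inner ℂ x (T x) : ℂ) = l * inner ℂ x x := by rw [hTx, inner_smul_right]
  have e3 : (inner ℂ x ((LinearMap.adjoint T) x) : ℂ) = starRingEnd ℂ l * inner ℂ x x := by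
    rw [LinearMap.adjoint_inner_right, hTx, inner_smul_left]
  have h := congrArg (fun S : E →ₗ[ℂ] E => (inner ℂ x (S x) : ℂ)) hiso
  simp only [LinearMap.smul_apply, LinearMap.add_apply, inner_smul_right, inner_add_right,
    e1, e2, e3] at h
  have hxx : (inner ℂ x x : ℂ) ≠ 0 := by simpa [inner_self_eq_zero] using hxne
  have key2 : (2 : ℂ) * (starRingEnd ℂ l * l) = l + starRingEnd ℂ l := by
    refine mul_right_cancel₀ (b := (inner ℂ x x : ℂ)) hxx ?_
    linear_combination h
  have hre : l.re * l.re + l.im * l.im = l.re := by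
    have := congrArg Complex.re key2
    simp [Complex.mul_re, Complex.mul_im, Complex.add_re, Complex.conj_re,
      Complex.conj_im] at this
    linarith
  have h1 : ‖l‖ ^ 2 = l.re := by
    rw [Complex.sq_norm, Complex.normSq_apply]; linarith
  refine ⟨h1, ?_⟩
  have h2 : ‖l - 1 / 2‖ ^ 2 = (1 / 2 : ℝ) ^ 2 := by
    rw [Complex.sq_norm, Complex.normSq_apply]
    simp [Complex.sub_re, Complex.sub_im]
    nlinarith [hre]
  nlinarith [norm_nonneg (l - 1/2), h2, sq_nonneg (‖l - 1/2‖ - 1/2),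
    sq_nonneg (‖l - 1/2‖ + 1/2)]
end

section
/- Let E be a nonzero finite-dimensional complex inner product space and T : E → E an iso-averaged linear map with T ≠ id. Define the subdominant radius ρ₁(T) := sSup ({|λ| : λ ∈ spectrum(T), λ ≠ 1} ∪ {0}). Then ρ₁(T) < 1, and for every θ ∈ (0, 2): ρ₁(T_θ)² = θ(2 − θ)ρ₁(T)² + (1 − θ)²; moreover, if θ ≠ 1 then ρ₁(T) < ρ₁(T_θ) < 1. -/
/-- The subdominant radius of a linear endomorphism: the supremum of the moduli of its
eigenvalues different from `1`, together with `0`. -/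
noncomputable def subdominantRadius {E : Type*} [NormedAddCommGroup E]
    [InnerProductSpace ℂ E] (A : E →ₗ[ℂ] E) : ℝ :=
  sSup ({r : ℝ | ∃ l ∈ spectrum ℂ A, l ≠ 1 ∧ r = ‖l‖} ∪ {0})

section Aux

open Complex Pointwise


variable {E : Type*} [NormedAddCommGroup E] [InnerProductSpace ℂ E] [FiniteDimensional ℂ E]

local notation "⟪" x ", " y "⟫" => @inner ℂ _ _ x y

lemma re_inner_symm (x y : E) : (⟪x, y⟫).re = (⟪y, x⟫).re := by
  rw [← inner_conj_symm x y, Complex.conj_re]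

lemma isoA_norm_sq (T : E →ₗ[ℂ] E)
    (hiso : (2 : ℂ) • (LinearMap.adjoint T ∘ₗ T) = T + LinearMap.adjoint T) (x : E) :
    ‖T x‖ ^ 2 = (⟪x, T x⟫).re := by
  have h : ((2 : ℂ) • (LinearMap.adjoint T ∘ₗ T)) x = (T + LinearMap.adjoint T) x := by
    rw [hiso]
  have h2 := congrArg (fun z => (⟪x, z⟫ : ℂ)) h
  simp only [LinearMap.smul_apply, LinearMap.comp_apply, LinearMap.add_apply,
    inner_smul_right, inner_add_right, LinearMap.adjoint_inner_right] at h2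
  rw [inner_self_eq_norm_sq_to_K] at h2
  norm_cast at h2
  have h2' : 2 * (Complex.ofReal (‖T x‖ ^ 2)) = ⟪x, T x⟫ + ⟪T x, x⟫ := h2
  have h4 := congrArg Complex.re h2'
  rw [Complex.add_re, re_inner_symm (T x) x] at h4
  simp only [Complex.mul_re, Complex.ofReal_re, Complex.ofReal_im, Complex.re_ofNat,
    Complex.im_ofNat, mul_zero, sub_zero] at h4
  linarith

lemma isoA_contraction (T : E →ₗ[ℂ] E)
    (hiso : (2 : ℂ) • (LinearMap.adjoint T ∘ₗ T) = T + LinearMap.adjoint T) (x : E) :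
    ‖T x‖ ≤ ‖x‖ := by
  have h1 := isoA_norm_sq T hiso x
  have h2 : (⟪x, T x⟫).re ≤ ‖⟪x, T x⟫‖ := Complex.re_le_norm _
  have h3 : ‖⟪x, T x⟫‖ ≤ ‖x‖ * ‖T x‖ := by
    exact norm_inner_le_norm x (T x)
  nlinarith [norm_nonneg (T x), norm_nonneg x]

lemma isoA_adjoint_fixed (T : E →ₗ[ℂ] E)
    (hiso : (2 : ℂ) • (LinearMap.adjoint T ∘ₗ T) = T + LinearMap.adjoint T) {y : E}
    (hy : T y = y) : LinearMap.adjoint T y = y := by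
  set z := LinearMap.adjoint T y with hz
  have hzy : ‖z‖ ≤ ‖y‖ := by
    have h1 : (⟪z, z⟫ : ℂ) = ⟪T z, y⟫ := by
      rw [hz, LinearMap.adjoint_inner_right]
    have h2 : ‖z‖ ^ 2 = (⟪T z, y⟫).re := by
      rw [← h1]; rw [inner_self_eq_norm_sq_to_K]
      have : ((Complex.ofReal (‖z‖ ^ 2))).re = ‖z‖ ^ 2 := Complex.ofReal_re _
      rw [← this]; norm_cast
    have h3 : (⟪T z, y⟫).re ≤ ‖⟪T z, y⟫‖ := Complex.re_le_norm _
    have h4 : ‖⟪T z, y⟫‖ ≤ ‖T z‖ * ‖y‖ := by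
      exact norm_inner_le_norm _ _
    have h5 : ‖T z‖ ≤ ‖z‖ := isoA_contraction T hiso z
    nlinarith [norm_nonneg z, norm_nonneg y, norm_nonneg (T z)]
  have hre : (⟪z, y⟫ : ℂ).re = ‖y‖ ^ 2 := by
    have h1 : (⟪z, y⟫ : ℂ) = ⟪y, T y⟫ := by rw [hz, LinearMap.adjoint_inner_left]
    rw [h1, hy, inner_self_eq_norm_sq_to_K]
    have : ((Complex.ofReal (‖y‖ ^ 2))).re = ‖y‖ ^ 2 := Complex.ofReal_re _
    rw [← this]; norm_cast
  have hsub : ‖z - y‖ ^ 2 = ‖z‖ ^ 2 - 2 * (⟪z, y⟫ : ℂ).re + ‖y‖ ^ 2 := by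
    have := @norm_sub_sq ℂ E _ _ _ z y
    exact_mod_cast this
  have : ‖z - y‖ ^ 2 ≤ 0 := by
    rw [hsub, hre]; nlinarith [norm_nonneg z, norm_nonneg y, hzy]
  have hz0 : ‖z - y‖ = 0 := le_antisymm (by nlinarith [norm_nonneg (z - y)]) (norm_nonneg _)
  have := norm_eq_zero.mp hz0
  rwa [sub_eq_zero] at this

lemma isoA_spec_shape (T : E →ₗ[ℂ] E)
    (hiso : (2 : ℂ) • (LinearMap.adjoint T ∘ₗ T) = T + LinearMap.adjoint T) {l : ℂ}
    (hl : l ∈ spectrum ℂ T) : ‖l‖ ^ 2 = l.re := by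
  have hev : Module.End.HasEigenvalue T l :=
    Module.End.HasEigenvalue.of_mem_spectrum hl
  obtain ⟨x, hx⟩ := hev.exists_hasEigenvector
  have hTx : T x = l • x := hx.apply_eq_smul
  have h := isoA_norm_sq T hiso x
  rw [hTx] at h
  have hL : ‖l • x‖ ^ 2 = ‖l‖ ^ 2 * ‖x‖ ^ 2 := by
    rw [norm_smul]; ring
  have hR : (⟪x, l • x⟫ : ℂ).re = l.re * ‖x‖ ^ 2 := by
    rw [inner_smul_right, inner_self_eq_norm_sq_to_K]
    have : (l * Complex.ofReal (‖x‖ ^ 2)).re = l.re * ‖x‖ ^ 2 := by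
      simp only [Complex.mul_re, Complex.ofReal_re, Complex.ofReal_im, mul_zero, sub_zero]
    rw [← this]; norm_cast
  rw [hL, hR] at h
  have hx0 : ‖x‖ ≠ 0 := norm_ne_zero_iff.mpr hx.right
  have hx2 : ‖x‖ ^ 2 > 0 := by positivity
  field_simp at h
  nlinarith [h]

lemma isoA_abs_lt_one (T : E →ₗ[ℂ] E)
    (hiso : (2 : ℂ) • (LinearMap.adjoint T ∘ₗ T) = T + LinearMap.adjoint T) {l : ℂ}
    (hl : l ∈ spectrum ℂ T) (hl1 : l ≠ 1) : ‖l‖ < 1 := by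
  have h := isoA_spec_shape T hiso hl
  have hre : l.re ≤ ‖l‖ := Complex.re_le_norm l
  have h0 : 0 ≤ ‖l‖ := norm_nonneg _
  have hle : ‖l‖ ≤ 1 := by nlinarith
  rcases lt_or_eq_of_le hle with h1 | h1
  · exact h1
  · exfalso
    apply hl1
    have hre1 : l.re = 1 := by rw [← h, h1]; norm_num
    have him : l.im = 0 := by
      have := Complex.sq_norm l
      rw [Complex.normSq_apply, h1] at this
      nlinarith
    exact Complex.ext (by simp [hre1]) (by simp [him])

lemma isoA_exists_ne_one [Nontrivial E] (T : E →ₗ[ℂ] E)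
    (hiso : (2 : ℂ) • (LinearMap.adjoint T ∘ₗ T) = T + LinearMap.adjoint T)
    (hT : T ≠ LinearMap.id) : ∃ l ∈ spectrum ℂ T, l ≠ 1 := by
  classical
  set F : Submodule ℂ E := LinearMap.ker (T - LinearMap.id) with hF
  have hmemF : ∀ v : E, v ∈ F ↔ T v = v := by
    intro v
    simp [hF, LinearMap.mem_ker, LinearMap.sub_apply, sub_eq_zero]
  have hFne : F ≠ ⊤ := by
    intro h
    apply hT
    ext v
    have : v ∈ F := h ▸ Submodule.mem_top
    simpa using (hmemF v).mp this
  have hFbot : Fᗮ ≠ ⊥ := by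
    intro h
    exact hFne (Submodule.orthogonal_eq_bot_iff.mp h)
  have : Nontrivial (Fᗮ : Submodule ℂ E) := Submodule.nontrivial_iff_ne_bot.mpr hFbot
  have hinv : ∀ v ∈ Fᗮ, T v ∈ Fᗮ := by
    intro v hv
    rw [Submodule.mem_orthogonal] at hv ⊢
    intro u hu
    have hu' : T u = u := (hmemF u).mp hu
    have hadj : LinearMap.adjoint T u = u := isoA_adjoint_fixed T hiso hu'
    calc (⟪u, T v⟫ : ℂ) = ⟪LinearMap.adjoint T u, v⟫ := by
          rw [LinearMap.adjoint_inner_left]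
      _ = ⟪u, v⟫ := by rw [hadj]
      _ = 0 := hv u hu
  let T' : (Fᗮ : Submodule ℂ E) →ₗ[ℂ] (Fᗮ : Submodule ℂ E) := T.restrict hinv
  obtain ⟨μ, hμ⟩ := Module.End.exists_eigenvalue T'
  obtain ⟨v, hv⟩ := hμ.exists_hasEigenvector
  have hTv : T (v : E) = μ • (v : E) := by
    have := hv.apply_eq_smul
    have h2 := congrArg (Subtype.val) this
    simpa [LinearMap.restrict_apply, T'] using h2
  have hv0 : (v : E) ≠ 0 := by
    simpa [Submodule.coe_eq_zero] using hv.right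
  refine ⟨μ, ?_, ?_⟩
  · exact Module.End.hasEigenvalue_iff_mem_spectrum.mp
      (Module.End.hasEigenvalue_of_hasEigenvector
        ⟨Module.End.mem_eigenspace_iff.mpr hTv, hv0⟩)
  · intro h1
    rw [h1, one_smul] at hTv
    have hvF : (v : E) ∈ F := (hmemF _).mpr hTv
    have hvO : (v : E) ∈ Fᗮ := v.2
    have : (⟪(v : E), (v : E)⟫ : ℂ) = 0 := (Submodule.mem_orthogonal F _).mp hvO _ hvF
    exact hv0 (inner_self_eq_zero.mp this)

lemma spec_relax (T : E →ₗ[ℂ] E) {c : ℂ} (hc : c ≠ 0) (μ : ℂ) :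
    μ ∈ spectrum ℂ (c • T + ((1 : ℂ) - c) • LinearMap.id) ↔
      ∃ l ∈ spectrum ℂ T, μ = c * l + (1 - c) := by
  have hrw : c • T + ((1 : ℂ) - c) • LinearMap.id
      = algebraMap ℂ (Module.End ℂ E) (1 - c) + c • T := by
    rw [add_comm, Algebra.algebraMap_eq_smul_one]
    rfl
  rw [hrw, ← spectrum.singleton_add_eq]
  have hsmul : spectrum ℂ (c • T) = (Units.mk0 c hc) • spectrum ℂ T :=
    spectrum.unit_smul_eq_smul T (Units.mk0 c hc)
  rw [hsmul]
  constructor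
  · rintro ⟨a, ha, b, hb, rfl⟩
    rw [Set.mem_singleton_iff] at ha
    obtain ⟨l, hl, rfl⟩ := hb
    exact ⟨l, hl, by subst ha; simp [Units.smul_def]; ring⟩
  · rintro ⟨l, hl, rfl⟩
    exact ⟨1 - c, rfl, c * l, ⟨l, hl, by simp [Units.smul_def]⟩, by ring⟩

lemma abs_relax (θ : ℝ) {l : ℂ} (hshape : ‖l‖ ^ 2 = l.re) :
    ‖(θ : ℂ) * l + (1 - (θ : ℂ))‖ ^ 2
      = θ * (2 - θ) * ‖l‖ ^ 2 + (1 - θ) ^ 2 := by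
  have h1 : ∀ z : ℂ, ‖z‖ ^ 2 = z.re ^ 2 + z.im ^ 2 := fun z => by
    rw [Complex.sq_norm, Complex.normSq_apply]; ring
  have hre : ((θ : ℂ) * l + (1 - (θ : ℂ))).re = θ * l.re + (1 - θ) := by
    simp [Complex.add_re, Complex.mul_re, Complex.sub_re]
  have him : ((θ : ℂ) * l + (1 - (θ : ℂ))).im = θ * l.im := by
    simp [Complex.add_im, Complex.mul_im, Complex.sub_im]
  rw [h1, hre, him]
  linear_combination (-(θ^2)) * h1 l + (-(2*θ*(1-θ))) * hshape + (θ*(2-θ)) * hshape + (θ^2) * hshape + (-(2*θ)) * hshape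


lemma sset_finite (A : E →ₗ[ℂ] E) :
    Set.Finite ({r : ℝ | ∃ l ∈ spectrum ℂ A, l ≠ 1 ∧ r = ‖l‖} ∪ {0}) := by
  apply Set.Finite.union
  · apply Set.Finite.subset ((Module.End.finite_spectrum A).image (fun l : ℂ => ‖l‖))
    rintro r ⟨l, hl, -, rfl⟩
    exact ⟨l, hl, rfl⟩
  · exact Set.finite_singleton 0


end Aux

/-- Let `E` be a nonzero finite-dimensional complex inner product space
and `T` an iso-averaged linear map with `T ≠ id`. Then `ρ₁(T) < 1`, and for every
`θ ∈ (0, 2)` one has `ρ₁(T_θ)² = θ(2-θ)ρ₁(T)² + (1-θ)²`; moreover if `θ ≠ 1` then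
`ρ₁(T) < ρ₁(T_θ) < 1`. -/
theorem subdominantRadius_relaxation {E : Type*} [NormedAddCommGroup E]
    [InnerProductSpace ℂ E] [FiniteDimensional ℂ E] [Nontrivial E] (T : E →ₗ[ℂ] E)
    (hiso : (2 : ℂ) • (LinearMap.adjoint T ∘ₗ T) = T + LinearMap.adjoint T)
    (hT : T ≠ LinearMap.id) :
    subdominantRadius T < 1 ∧
      ∀ θ : ℝ, θ ∈ Set.Ioo (0 : ℝ) 2 →
        subdominantRadius ((θ : ℂ) • T + ((1 : ℂ) - (θ : ℂ)) • LinearMap.id) ^ 2 =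
            θ * (2 - θ) * subdominantRadius T ^ 2 + (1 - θ) ^ 2 ∧
          (θ ≠ 1 →
            subdominantRadius T <
                subdominantRadius ((θ : ℂ) • T + ((1 : ℂ) - (θ : ℂ)) • LinearMap.id) ∧
              subdominantRadius ((θ : ℂ) • T + ((1 : ℂ) - (θ : ℂ)) • LinearMap.id) < 1) := by
  classical
  have hfin := sset_finite T
  have hne : ({r : ℝ | ∃ l ∈ spectrum ℂ T, l ≠ 1 ∧ r = ‖l‖} ∪ {0}).Nonempty :=
    ⟨0, Or.inr rfl⟩
  have hbdd := hfin.bddAbove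
  have hr_def : subdominantRadius T
      = sSup ({r : ℝ | ∃ l ∈ spectrum ℂ T, l ≠ 1 ∧ r = ‖l‖} ∪ {0}) := rfl
  have hr0 : 0 ≤ subdominantRadius T := by
    rw [hr_def]; exact le_csSup hbdd (Or.inr rfl)
  have hub : ∀ l ∈ spectrum ℂ T, l ≠ 1 → ‖l‖ ≤ subdominantRadius T := by
    intro l hl h1
    rw [hr_def]; exact le_csSup hbdd (Or.inl ⟨l, hl, h1, rfl⟩)
  have hmem := hne.csSup_mem hfin
  have hex : ∃ l ∈ spectrum ℂ T, l ≠ 1 ∧ ‖l‖ = subdominantRadius T := by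
    rcases hmem with ⟨l, hl, h1, he⟩ | h0
    · exact ⟨l, hl, h1, by rw [hr_def, ← he]⟩
    · obtain ⟨l₀, hl₀, h1₀⟩ := isoA_exists_ne_one T hiso hT
      refine ⟨l₀, hl₀, h1₀, ?_⟩
      have h2 := hub l₀ hl₀ h1₀
      have h0' : subdominantRadius T = 0 := by rw [hr_def, h0]
      rw [h0'] at h2 ⊢
      exact le_antisymm h2 (norm_nonneg _)
  obtain ⟨l₀, hl₀σ, hl₀1, hl₀r⟩ := hex
  have hr1 : subdominantRadius T < 1 := hl₀r ▸ isoA_abs_lt_one T hiso hl₀σ hl₀1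
  refine ⟨hr1, ?_⟩
  rintro θ ⟨hθ0, hθ2⟩
  have hc : ((θ : ℝ) : ℂ) ≠ 0 := Complex.ofReal_ne_zero.mpr (ne_of_gt hθ0)
  set A := (θ : ℂ) • T + ((1 : ℂ) - (θ : ℂ)) • LinearMap.id with hA
  have hA_def : subdominantRadius A
      = sSup ({r : ℝ | ∃ l ∈ spectrum ℂ A, l ≠ 1 ∧ r = ‖l‖} ∪ {0}) := rfl
  have hpos : 0 < θ * (2 - θ) := mul_pos hθ0 (by linarith)
  have harg0 : 0 ≤ θ * (2 - θ) * subdominantRadius T ^ 2 + (1 - θ) ^ 2 := by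
    nlinarith [sq_nonneg (subdominantRadius T), sq_nonneg (1 - θ),
      mul_nonneg hpos.le (sq_nonneg (subdominantRadius T))]
  set g := Real.sqrt (θ * (2 - θ) * subdominantRadius T ^ 2 + (1 - θ) ^ 2) with hg
  have hIsG : IsGreatest
      ({r : ℝ | ∃ l ∈ spectrum ℂ A, l ≠ 1 ∧ r = ‖l‖} ∪ {0}) g := by
    constructor
    · left
      refine ⟨(θ : ℂ) * l₀ + (1 - (θ : ℂ)), ?_, ?_, ?_⟩
      · exact (spec_relax T hc _).mpr ⟨l₀, hl₀σ, rfl⟩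
      · intro h
        apply hl₀1
        have h2 : ((θ : ℝ) : ℂ) * (l₀ - 1) = 0 := by linear_combination h
        rcases mul_eq_zero.mp h2 with h3 | h3
        · exact absurd h3 hc
        · exact sub_eq_zero.mp h3
      · have habs := abs_relax θ (isoA_spec_shape T hiso hl₀σ)
        rw [hl₀r] at habs
        rw [hg, ← habs, Real.sqrt_sq (norm_nonneg _)]
    · rintro r (⟨μ, hμ, hμ1, rfl⟩ | h0)
      · obtain ⟨l, hl, rfl⟩ := (spec_relax T hc μ).mp hμ
        have hl1 : l ≠ 1 := by
          rintro rfl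
          exact hμ1 (by ring)
        have habs := abs_relax θ (isoA_spec_shape T hiso hl)
        have hle : ‖l‖ ≤ subdominantRadius T := hub l hl hl1
        have h2 : ‖(θ : ℂ) * l + (1 - (θ : ℂ))‖ ^ 2
            ≤ θ * (2 - θ) * subdominantRadius T ^ 2 + (1 - θ) ^ 2 := by
          rw [habs]
          nlinarith [norm_nonneg l, hle, hr0,
            mul_le_mul_of_nonneg_left (mul_le_mul hle hle (norm_nonneg _) hr0) hpos.le]
        calc ‖(θ : ℂ) * l + (1 - (θ : ℂ))‖
            = Real.sqrt (‖(θ : ℂ) * l + (1 - (θ : ℂ))‖ ^ 2) :=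
              (Real.sqrt_sq (norm_nonneg _)).symm
          _ ≤ g := Real.sqrt_le_sqrt h2
      · rw [Set.mem_singleton_iff] at h0
        rw [h0]
        exact Real.sqrt_nonneg _
  have hSup' : subdominantRadius A = g := by rw [hA_def]; exact hIsG.csSup_eq
  constructor
  · rw [hSup', hg, Real.sq_sqrt harg0]
  · intro hθ1
    have hne1 : 1 - θ ≠ 0 := fun h => hθ1 (by linarith)
    have h1θ : 0 < (1 - θ) ^ 2 :=
      lt_of_le_of_ne (sq_nonneg _) (Ne.symm (pow_ne_zero 2 hne1))
    have hr2 : subdominantRadius T ^ 2 < 1 := by nlinarith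
    constructor
    · have hsq : subdominantRadius T ^ 2 < subdominantRadius A ^ 2 := by
        rw [hSup', hg, Real.sq_sqrt harg0]
        nlinarith [mul_pos h1θ (by linarith : (0 : ℝ) < 1 - subdominantRadius T ^ 2)]
      exact lt_of_pow_lt_pow_left₀ 2 (by rw [hSup']; exact Real.sqrt_nonneg _) hsq
    · have hsq : subdominantRadius A ^ 2 < 1 := by
        rw [hSup', hg, Real.sq_sqrt harg0]
        nlinarith [mul_pos hpos (by linarith : (0 : ℝ) < 1 - subdominantRadius T ^ 2)]
      have := lt_of_pow_lt_pow_left₀ 2 zero_le_one (show subdominantRadius A ^ 2 < 1 ^ 2 by rw [one_pow]; exact hsq)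
      exact this
end

section
/- Let E be a finite-dimensional real inner product space, T : E → E an iso-averaged linear map, and θ ∈ (0, 2). Let P denote the orthogonal projection onto Fix T := {x ∈ E : T x = x}. Then the powers of T_θ converge linearly to P: there exist M ≥ 0 and ρ ∈ [0, 1) such that ‖T_θ^k − P‖ ≤ M ρ^k for all k ∈ ℕ, where ‖·‖ is the operator norm. In particular, T_θ^k x → P x as k → ∞ for every x ∈ E. -/
set_option maxHeartbeats 1000000
set_option synthInstance.maxHeartbeats 400000

section auxlem
variable {E : Type*} [NormedAddCommGroup E] [InnerProductSpace ℝ E] [FiniteDimensional ℝ E]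

lemma iso_inner_aux (T : E →ₗ[ℝ] E)
    (hiso : (2 : ℝ) • (LinearMap.adjoint T ∘ₗ T) = T + LinearMap.adjoint T) (x : E) :
    (inner ℝ (T x) (T x) : ℝ) = inner ℝ (T x) x := by
  have h := congrArg (fun S : E →ₗ[ℝ] E => (inner ℝ (S x) x : ℝ)) hiso
  simp only [LinearMap.smul_apply, LinearMap.add_apply, LinearMap.comp_apply,
    real_inner_smul_left, inner_add_left] at h
  rw [LinearMap.adjoint_inner_left] at h
  have h2 : (inner ℝ (LinearMap.adjoint T x) x : ℝ) = inner ℝ (T x) x := by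
    rw [LinearMap.adjoint_inner_left, real_inner_comm]
  rw [h2] at h
  linarith

lemma relax_norm_sq_aux (T : E →ₗ[ℝ] E)
    (hiso : (2 : ℝ) • (LinearMap.adjoint T ∘ₗ T) = T + LinearMap.adjoint T) (θ : ℝ) (x : E) :
    ‖θ • T x + (1 - θ) • x‖ ^ 2 = ‖x‖ ^ 2 - θ * (2 - θ) * ‖T x - x‖ ^ 2 := by
  have h1 := iso_inner_aux T hiso x
  have e1 : ‖θ • T x + (1 - θ) • x‖ ^ 2 = θ^2 * inner ℝ (T x) (T x)
      + 2 * (θ * (1-θ) * inner ℝ (T x) x) + (1-θ)^2 * ‖x‖^2 := by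
    rw [norm_add_sq_real, real_inner_smul_left, real_inner_smul_right, norm_smul, norm_smul,
      mul_pow, mul_pow, ← real_inner_self_eq_norm_sq (T x)]
    simp only [Real.norm_eq_abs, sq_abs]
    ring
  have e2 : ‖T x - x‖ ^ 2 = inner ℝ (T x) (T x) - 2 * inner ℝ (T x) x + ‖x‖^2 := by
    rw [norm_sub_sq_real, real_inner_self_eq_norm_sq]
  rw [e1, e2, h1]; ring

end auxlem



/-- The fixed-point subspace `Fix T = {x : T x = x}` of a linear endomorphism. -/
noncomputable def fixedSubspace {E : Type*} [NormedAddCommGroup E]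
    [InnerProductSpace ℝ E] (T : E →ₗ[ℝ] E) : Submodule ℝ E :=
  LinearMap.eqLocus T LinearMap.id

/-- The orthogonal projection onto `Fix T`, viewed as an endomorphism of `E`. -/
noncomputable def fixedProjection {E : Type*} [NormedAddCommGroup E]
    [InnerProductSpace ℝ E] [FiniteDimensional ℝ E] (T : E →ₗ[ℝ] E) : E →ₗ[ℝ] E :=
  (fixedSubspace T).subtype ∘ₗ ((fixedSubspace T).orthogonalProjection).toLinearMap

/-- If `T` is iso-averaged and `θ ∈ (0, 2)`, then the powers of
`T_θ = θ • T + (1-θ) • id` converge linearly to the orthogonal projection `P` onto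
`Fix T`: there are `M ≥ 0` and `ρ ∈ [0, 1)` with `‖T_θ^k - P‖ ≤ M ρ^k` for all `k`
(operator norm); in particular `T_θ^k x → P x` for every `x`. -/
theorem relaxation_pow_tendsto_fixedProjection {E : Type*} [NormedAddCommGroup E]
    [InnerProductSpace ℝ E] [FiniteDimensional ℝ E] (T : E →ₗ[ℝ] E)
    (hiso : (2 : ℝ) • (LinearMap.adjoint T ∘ₗ T) = T + LinearMap.adjoint T)
    (θ : ℝ) (hθ : θ ∈ Set.Ioo (0 : ℝ) 2) :
    (∃ M : ℝ, 0 ≤ M ∧ ∃ ρ : ℝ, ρ ∈ Set.Ico (0 : ℝ) 1 ∧ ∀ k : ℕ,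
        ‖LinearMap.toContinuousLinearMap
            (((θ • T + (1 - θ) • LinearMap.id : E →ₗ[ℝ] E) ^ k) - fixedProjection T)‖ ≤
          M * ρ ^ k) ∧
      ∀ x : E,
        Filter.Tendsto (fun k : ℕ => (((θ • T + (1 - θ) • LinearMap.id : E →ₗ[ℝ] E) ^ k)) x)
          Filter.atTop (nhds (fixedProjection T x)) := by
  obtain ⟨hθ0, hθ2⟩ := hθ
  set F := fixedSubspace T with hF
  set Tθ : E →ₗ[ℝ] E := θ • T + (1 - θ) • LinearMap.id with hTθdef
  have hTθ : ∀ x : E, Tθ x = θ • T x + (1 - θ) • x := fun x => by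
    simp [hTθdef]
  have key : ∀ x : E, ‖Tθ x‖ ^ 2 = ‖x‖ ^ 2 - θ * (2 - θ) * ‖T x - x‖ ^ 2 := fun x => by
    rw [hTθ]; exact relax_norm_sq_aux T hiso θ x
  have hθθ : 0 < θ * (2 - θ) := by nlinarith
  -- adjoint fixes F
  have hadj : ∀ x ∈ F, LinearMap.adjoint T x = x := by
    intro x hx
    have hx' : T x = x := hx
    have h := congrArg (fun S : E →ₗ[ℝ] E => S x) hiso
    simp only [LinearMap.smul_apply, LinearMap.comp_apply, LinearMap.add_apply, hx'] at h
    rw [two_smul] at h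
    exact add_right_cancel h
  have hinv : ∀ y ∈ Fᗮ, Tθ y ∈ Fᗮ := by
    intro y hy
    rw [Submodule.mem_orthogonal] at hy ⊢
    intro u hu
    have h1 : (inner ℝ u (T y) : ℝ) = 0 := by
      rw [← LinearMap.adjoint_inner_left T y u, hadj u hu]; exact hy u hu
    rw [hTθ, inner_add_right, real_inner_smul_right, real_inner_smul_right, h1, hy u hu]
    ring
  have hfixTθ : ∀ x ∈ F, Tθ x = x := by
    intro x hx
    have hx' : T x = x := hx
    have h : θ + (1 - θ) = 1 := by ring
    rw [hTθ, hx', ← add_smul, h, one_smul]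
  have hfixpow : ∀ k : ℕ, ∀ x ∈ F, (Tθ ^ k) x = x := by
    intro k
    induction k with
    | zero => intro x hx; simp
    | succ n ih =>
      intro x hx
      rw [pow_succ, Module.End.mul_apply, hfixTθ x hx]
      exact ih x hx
  -- the restricted operator on Fᗮ
  set S : Fᗮ →ₗ[ℝ] Fᗮ := Tθ.restrict hinv with hS
  set Sc := LinearMap.toContinuousLinearMap S with hSc
  set ρ := ‖Sc‖ with hρ
  have hρ0 : 0 ≤ ρ := by rw [hρ]; exact norm_nonneg Sc
  have hScnorm : ∀ y : Fᗮ, ‖Sc y‖ = ‖Tθ (y : E)‖ := by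
    intro y
    simp [hSc, hS, LinearMap.restrict_apply]
  have hbV : ∀ y : E, y ∈ Fᗮ → ‖Tθ y‖ ≤ ρ * ‖y‖ := by
    intro y hy
    have h := Sc.le_opNorm ⟨y, hy⟩
    rwa [hScnorm ⟨y, hy⟩] at h
  have hρ1 : ρ < 1 := by
    by_cases hV : ∀ y : Fᗮ, y = 0
    · have hSc0 : Sc = 0 := by
        ext y; rw [hV y]; simp
      rw [hρ, hSc0]
      have : ‖(0 : Fᗮ →L[ℝ] Fᗮ)‖ = 0 := ContinuousLinearMap.opNorm_zero
      rw [this]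
      norm_num
    · push_neg at hV
      obtain ⟨v, hv⟩ := hV
      have hvn : ‖v‖ ≠ 0 := norm_ne_zero_iff.mpr hv
      have hsne : (Metric.sphere (0 : Fᗮ) 1).Nonempty := by
        refine ⟨‖v‖⁻¹ • v, ?_⟩
        rw [mem_sphere_zero_iff_norm, norm_smul, Real.norm_eq_abs,
          abs_of_nonneg (inv_nonneg.mpr (norm_nonneg v))]
        exact inv_mul_cancel₀ hvn
      obtain ⟨x₀, hx₀s, hmax⟩ := (isCompact_sphere (0 : Fᗮ) 1).exists_isMaxOn hsne
        ((continuous_norm.comp Sc.continuous).continuousOn)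
      have hx₀n : ‖x₀‖ = 1 := by simpa using hx₀s
      have hx₀0 : (x₀ : E) ≠ 0 := by
        intro h
        have : x₀ = 0 := Subtype.ext h
        rw [this] at hx₀n; simp at hx₀n
      have hcoen : ‖(x₀ : E)‖ = 1 := hx₀n
      have hnotfix : T (x₀ : E) ≠ (x₀ : E) := by
        intro h
        have hmemF : (x₀ : E) ∈ F := h
        have h0 := (Submodule.mem_orthogonal F (x₀ : E)).1 x₀.2 (x₀ : E) hmemF
        rw [real_inner_self_eq_norm_sq, hcoen] at h0
        norm_num at h0
      have hlt : ‖Sc x₀‖ < 1 := by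
        rw [hScnorm x₀]
        have hk := key (x₀ : E)
        have hd : 0 < ‖T (x₀ : E) - (x₀ : E)‖ :=
          norm_pos_iff.mpr (sub_ne_zero.mpr hnotfix)
        rw [hcoen] at hk
        nlinarith [mul_pos hθθ (pow_pos hd 2), sq_nonneg (‖Tθ (x₀ : E)‖ - 1),
          norm_nonneg (Tθ (x₀ : E))]
      have hle : ρ ≤ ‖Sc x₀‖ := by
        apply ContinuousLinearMap.opNorm_le_bound _ (norm_nonneg _)
        intro y
        rcases eq_or_ne y 0 with rfl | hy
        · simp
        · have hyn : ‖y‖ ≠ 0 := norm_ne_zero_iff.mpr hy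
          have hmem : (‖y‖⁻¹ • y) ∈ Metric.sphere (0 : Fᗮ) 1 := by
            rw [mem_sphere_zero_iff_norm, norm_smul, Real.norm_eq_abs,
              abs_of_nonneg (inv_nonneg.mpr (norm_nonneg y))]
            exact inv_mul_cancel₀ hyn
          have h1 := hmax hmem
          have h2 : ‖Sc (‖y‖⁻¹ • y)‖ = ‖y‖⁻¹ * ‖Sc y‖ := by
            rw [map_smul, norm_smul, Real.norm_eq_abs, abs_of_nonneg
              (inv_nonneg.mpr (norm_nonneg _))]
          simp only [Function.comp_apply, Set.mem_setOf_eq] at h1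
          rw [h2] at h1
          have := mul_le_mul_of_nonneg_left h1 (norm_nonneg y)
          rw [← mul_assoc, mul_inv_cancel₀ hyn, one_mul] at this
          linarith [this]
      linarith
  -- power bound on Fᗮ
  have hpow : ∀ k : ℕ, ∀ y : E, y ∈ Fᗮ → (Tθ ^ k) y ∈ Fᗮ ∧ ‖(Tθ ^ k) y‖ ≤ ρ ^ k * ‖y‖ := by
    intro k
    induction k with
    | zero => intro y hy; simpa using hy
    | succ n ih =>
      intro y hy
      obtain ⟨hm, hb⟩ := ih (Tθ y) (hinv y hy)
      refine ⟨?_, ?_⟩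
      · rw [pow_succ, Module.End.mul_apply]; exact hm
      · rw [pow_succ, Module.End.mul_apply]
        calc ‖(Tθ ^ n) (Tθ y)‖ ≤ ρ ^ n * ‖Tθ y‖ := hb
          _ ≤ ρ ^ n * (ρ * ‖y‖) :=
            mul_le_mul_of_nonneg_left (hbV y hy) (pow_nonneg hρ0 n)
          _ = ρ ^ (n + 1) * ‖y‖ := by ring
  -- projection facts
  have hPmem : ∀ x : E, fixedProjection T x ∈ F := fun x => by
    simp [fixedProjection, hF]
  have hPsub : ∀ x : E, x - fixedProjection T x ∈ Fᗮ := fun x =>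
    Submodule.sub_starProjection_mem_orthogonal (K := F) x
  have hPle : ∀ x : E, ‖x - fixedProjection T x‖ ≤ ‖x‖ := by
    intro x
    have h0 : (inner ℝ (fixedProjection T x) (x - fixedProjection T x) : ℝ) = 0 :=
      (Submodule.mem_orthogonal F _).1 (hPsub x) _ (hPmem x)
    have h1 : ‖fixedProjection T x + (x - fixedProjection T x)‖ ^ 2
        = ‖fixedProjection T x‖ ^ 2 + 2 * inner ℝ (fixedProjection T x) (x - fixedProjection T x)
          + ‖x - fixedProjection T x‖ ^ 2 := norm_add_sq_real _ _
    rw [h0, add_sub_cancel] at h1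
    nlinarith [norm_nonneg x, norm_nonneg (x - fixedProjection T x),
      norm_nonneg (fixedProjection T x)]
  -- pointwise bound
  have hptwise : ∀ k : ℕ, ∀ x : E, ‖(Tθ ^ k) x - fixedProjection T x‖ ≤ ρ ^ k * ‖x‖ := by
    intro k x
    have hdecomp : (Tθ ^ k) x - fixedProjection T x = (Tθ ^ k) (x - fixedProjection T x) := by
      rw [map_sub, hfixpow k _ (hPmem x)]
    rw [hdecomp]
    calc ‖(Tθ ^ k) (x - fixedProjection T x)‖ ≤ ρ ^ k * ‖x - fixedProjection T x‖ :=
        (hpow k _ (hPsub x)).2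
      _ ≤ ρ ^ k * ‖x‖ := mul_le_mul_of_nonneg_left (hPle x) (pow_nonneg hρ0 k)
  constructor
  · refine ⟨1, zero_le_one, ρ, ⟨hρ0, hρ1⟩, fun k => ?_⟩
    rw [one_mul]
    apply ContinuousLinearMap.opNorm_le_bound _ (pow_nonneg hρ0 k)
    intro x
    simpa using hptwise k x
  · intro x
    rw [tendsto_iff_norm_sub_tendsto_zero]
    apply squeeze_zero (fun k => norm_nonneg _) (fun k => hptwise k x)
    have := (tendsto_pow_atTop_nhds_zero_of_lt_one hρ0 hρ1).mul_const ‖x‖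
    simpa using this
end

section
/- Let E be a finite-dimensional real inner product space, T : E → E an iso-averaged linear map, and θ ∈ (0, 2) with θ ≠ 1. If x ∈ E satisfies T x ≠ x, then the sequence (‖T_θ^k x‖)_{k ∈ ℕ} is strictly decreasing: ‖T_θ^{k+1} x‖ < ‖T_θ^k x‖ for all k ∈ ℕ. -/
/-!
Iso-averagedness says `⟪T y, y⟫ = ‖T y‖²`, which yields the energy identity
`‖y‖² - ‖T_θ y‖² = θ (2 - θ) ‖T y - y‖²`, so `T_θ` strictly shrinks every vector that `T` does
not fix. Likewise `‖T_θ y‖² = θ (2 - θ) ‖T y‖² + (1 - θ)² ‖y‖²`, so `T_θ` is injective for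
`θ ≠ 1`; as `T_θ` commutes with `T`, no iterate `T_θ^k x` becomes a fixed point of `T`.
-/

open scoped RealInnerProductSpace

section Relaxation

variable {E : Type*} [NormedAddCommGroup E] [InnerProductSpace ℝ E] {T : E →ₗ[ℝ] E}

theorem inner_apply_self_eq_norm_apply_sq_of_iso_averaged [FiniteDimensional ℝ E]
    (hiso : (2 : ℝ) • (LinearMap.adjoint T ∘ₗ T) = T + LinearMap.adjoint T) (y : E) :
    ⟪T y, y⟫ = ‖T y‖ ^ 2 := by
  have h := congrArg (fun L : E →ₗ[ℝ] E => ⟪L y, y⟫) hiso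
  simp only [LinearMap.smul_apply, LinearMap.add_apply, LinearMap.comp_apply,
    real_inner_smul_left, inner_add_left, LinearMap.adjoint_inner_left,
    real_inner_self_eq_norm_sq] at h
  linarith [real_inner_comm y (T y)]

variable (hT : ∀ y, ⟪T y, y⟫ = ‖T y‖ ^ 2)
include hT

theorem norm_sq_sub_norm_apply_sq_eq (y : E) : ‖y‖ ^ 2 - ‖T y‖ ^ 2 = ‖T y - y‖ ^ 2 := by
  rw [norm_sub_sq_real, hT]
  ring

theorem norm_relaxation_apply_sq (θ : ℝ) (y : E) :
    ‖(θ • T + (1 - θ) • LinearMap.id : E →ₗ[ℝ] E) y‖ ^ 2 = θ * (2 - θ) * ‖T y‖ ^ 2 + (1 - θ) ^ 2 * ‖y‖ ^ 2 := by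
  simp only [LinearMap.add_apply, LinearMap.smul_apply, LinearMap.id_apply]
  rw [norm_add_sq_real, norm_smul, norm_smul, real_inner_smul_left, real_inner_smul_right, hT,
    mul_pow, mul_pow, Real.norm_eq_abs, Real.norm_eq_abs, sq_abs, sq_abs]
  ring

theorem norm_sq_sub_norm_relaxation_apply_sq (θ : ℝ) (y : E) :
    ‖y‖ ^ 2 - ‖(θ • T + (1 - θ) • LinearMap.id : E →ₗ[ℝ] E) y‖ ^ 2 = θ * (2 - θ) * ‖T y - y‖ ^ 2 := by
  rw [norm_relaxation_apply_sq hT, ← norm_sq_sub_norm_apply_sq_eq hT]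
  ring

theorem norm_relaxation_apply_lt {θ : ℝ} (hθ : θ ∈ Set.Ioo 0 2) {y : E} (hy : T y ≠ y) :
    ‖(θ • T + (1 - θ) • LinearMap.id : E →ₗ[ℝ] E) y‖ < ‖y‖ := by
  have hpos : 0 < θ * (2 - θ) * ‖T y - y‖ ^ 2 :=
    mul_pos (mul_pos hθ.1 (sub_pos.2 hθ.2)) (pow_pos (norm_pos_iff.2 (sub_ne_zero.2 hy)) 2)
  rw [← norm_sq_sub_norm_relaxation_apply_sq hT] at hpos
  exact lt_of_pow_lt_pow_left₀ 2 (norm_nonneg y) (sub_pos.1 hpos)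

theorem relaxation_injective {θ : ℝ} (hθ : θ ∈ Set.Icc 0 2) (hθ1 : θ ≠ 1) :
    Function.Injective (θ • T + (1 - θ) • LinearMap.id : E →ₗ[ℝ] E) := by
  refine (injective_iff_map_eq_zero _).2 fun y hy => ?_
  have h := norm_relaxation_apply_sq hT θ y
  rw [hy, norm_zero, zero_pow two_ne_zero] at h
  have hθ' : 0 < (1 - θ) ^ 2 := sq_pos_of_ne_zero (sub_ne_zero.2 hθ1.symm)
  have hTy : 0 ≤ θ * (2 - θ) * ‖T y‖ ^ 2 :=
    mul_nonneg (mul_nonneg hθ.1 (sub_nonneg.2 hθ.2)) (sq_nonneg _)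
  have hy0 : ‖y‖ ^ 2 = 0 := by nlinarith [sq_nonneg ‖y‖]
  simpa using hy0

end Relaxation

theorem Commute.apply_ne_of_apply_ne {R M : Type*} [Semiring R] [AddCommMonoid M] [Module R M]
    {S T : Module.End R M} (hST : Commute S T) (hS : Function.Injective S) {x : M}
    (hx : T x ≠ x) (k : ℕ) : T ((S ^ k) x) ≠ (S ^ k) x := by
  rw [← Module.End.mul_apply, ← (hST.pow_left k).eq, Module.End.mul_apply]
  rw [Module.End.coe_pow]
  exact (hS.iterate k).ne hx

/-- If `T` is iso-averaged, `θ ∈ (0, 2)` with `θ ≠ 1`, and `T x ≠ x`,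
then the sequence `(‖T_θ^k x‖)` is strictly decreasing. -/
theorem norm_pow_relaxation_strict_anti {E : Type*} [NormedAddCommGroup E]
    [InnerProductSpace ℝ E] [FiniteDimensional ℝ E] (T : E →ₗ[ℝ] E)
    (hiso : (2 : ℝ) • (LinearMap.adjoint T ∘ₗ T) = T + LinearMap.adjoint T)
    (θ : ℝ) (hθ : θ ∈ Set.Ioo (0 : ℝ) 2) (hθ1 : θ ≠ 1) (x : E) (hx : T x ≠ x) :
    ∀ k : ℕ,
      ‖((θ • T + (1 - θ) • LinearMap.id : E →ₗ[ℝ] E) ^ (k + 1)) x‖ <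
        ‖((θ • T + (1 - θ) • LinearMap.id : E →ₗ[ℝ] E) ^ k) x‖ := by
  have hT := inner_apply_self_eq_norm_apply_sq_of_iso_averaged hiso
  have hcomm : Commute (θ • T + (1 - θ) • LinearMap.id : E →ₗ[ℝ] E) T :=
    ((Commute.refl T).smul_left θ).add_left ((Commute.one_left T).smul_left (1 - θ))
  intro k
  rw [pow_succ', Module.End.mul_apply]
  exact norm_relaxation_apply_lt hT hθ
    (hcomm.apply_ne_of_apply_ne (relaxation_injective hT (Set.Ioo_subset_Icc_self hθ) hθ1) hx k)
end

section
/- Let E be a finite-dimensional real inner product space and T : E → E an iso-averaged linear map. If x ∈ E does not belong to the subspace Fix T + ker T (the sum of the fixed-point subspace Fix T := {y : T y = y} and the kernel of T), then ‖T^{k+1} x‖ < ‖T^k x‖ for all k ∈ ℕ. -/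
/-!
Iso-averagedness says `⟪T y, y⟫ = ‖T y‖²`, i.e. `‖T y - y‖² = ‖y‖² - ‖T y‖²`, so `T` strictly
shrinks every vector it does not fix. It also gives `ker T ≤ ker T*`, hence `ker T² = ker T` and
`ker Tᵏ ≤ ker T`. If `Tᵏ x` were fixed, then `x - Tᵏ x ∈ ker Tᵏ ≤ ker T` and
`x ∈ Fix T + ker T`.
-/

open RealInnerProductSpace LinearMap

section

variable {E : Type*} [NormedAddCommGroup E] [InnerProductSpace ℝ E]

theorem mem_fixedSubspace_sup_ker_of_pow_apply_mem {T : E →ₗ[ℝ] E} {k : ℕ}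
    (hker : ker (T ^ k) ≤ ker T) {x : E} (hfix : (T ^ k) x ∈ fixedSubspace T) :
    x ∈ fixedSubspace T ⊔ ker T := by
  have hpow : (T ^ k) ((T ^ k) x) = (T ^ k) x := by
    rw [Module.End.pow_apply, Function.IsFixedPt.iterate (mem_eqLocus.mp hfix) k]
  have hrest : x - (T ^ k) x ∈ ker T := hker (by rw [mem_ker, map_sub, hpow, sub_self])
  simpa using Submodule.add_mem_sup hfix hrest

def IsIsoAveraged [FiniteDimensional ℝ E] (T : E →ₗ[ℝ] E) : Prop :=
  (2 : ℝ) • (adjoint T ∘ₗ T) = T + adjoint T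

namespace IsIsoAveraged

variable [FiniteDimensional ℝ E] {T : E →ₗ[ℝ] E}

theorem inner_apply_self (hT : IsIsoAveraged T) (y : E) : ⟪T y, y⟫ = ‖T y‖ ^ 2 := by
  have h := congrArg (fun S : E →ₗ[ℝ] E => ⟪S y, y⟫) hT
  simp only [LinearMap.smul_apply, LinearMap.add_apply, comp_apply, inner_smul_left,
    adjoint_inner_left, inner_add_left, RCLike.conj_to_real, real_inner_self_eq_norm_sq] at h
  linarith [real_inner_comm (T y) y]

theorem norm_sub_apply_sq (hT : IsIsoAveraged T) (y : E) :
    ‖T y - y‖ ^ 2 = ‖y‖ ^ 2 - ‖T y‖ ^ 2 := by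
  rw [norm_sub_sq_real, hT.inner_apply_self]; ring

theorem norm_apply_lt (hT : IsIsoAveraged T) {y : E} (hy : T y ≠ y) : ‖T y‖ < ‖y‖ := by
  have hpos : 0 < ‖T y - y‖ ^ 2 := by positivity [sub_ne_zero.mpr hy]
  rw [hT.norm_sub_apply_sq] at hpos
  exact lt_of_pow_lt_pow_left₀ 2 (norm_nonneg y) (by linarith)

theorem adjoint_apply_eq_zero (hT : IsIsoAveraged T) {y : E} (hy : T y = 0) :
    adjoint T y = 0 := by
  simpa [hy] using (congrArg (· y) hT).symm

theorem ker_sq_le_ker (hT : IsIsoAveraged T) : ker (T ^ 2) ≤ ker T := by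
  intro y hy
  rw [mem_ker, pow_two, Module.End.mul_apply] at hy
  rw [mem_ker, ← inner_self_eq_zero (𝕜 := ℝ), ← adjoint_inner_right,
    hT.adjoint_apply_eq_zero hy, inner_zero_right]

theorem ker_pow_le_ker (hT : IsIsoAveraged T) : ∀ k : ℕ, ker (T ^ k) ≤ ker T
  | 0 => by simp [Module.End.one_eq_id]
  | k + 1 => fun y hy => hT.ker_sq_le_ker <| hT.ker_pow_le_ker k <| by
      rwa [mem_ker, pow_succ, Module.End.mul_apply] at hy

end IsIsoAveraged

end

/-- If `T` is iso-averaged and `x ∉ Fix T + ker T`, then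
`‖T^{k+1} x‖ < ‖T^k x‖` for all `k`. -/
theorem norm_pow_strict_anti_of_not_mem_fix_sup_ker {E : Type*} [NormedAddCommGroup E]
    [InnerProductSpace ℝ E] [FiniteDimensional ℝ E] (T : E →ₗ[ℝ] E)
    (hiso : (2 : ℝ) • (LinearMap.adjoint T ∘ₗ T) = T + LinearMap.adjoint T)
    (x : E) (hx : x ∉ fixedSubspace T ⊔ LinearMap.ker T) :
    ∀ k : ℕ, ‖(T ^ (k + 1)) x‖ < ‖(T ^ k) x‖ := by
  intro k
  rw [pow_succ', Module.End.mul_apply]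
  exact IsIsoAveraged.norm_apply_lt hiso fun hfix =>
    hx (mem_fixedSubspace_sup_ker_of_pow_apply_mem (IsIsoAveraged.ker_pow_le_ker hiso k) hfix)
end

section
/- Let T : ℝ² → ℝ² be the linear map given in the standard basis by the matrix [[0, 1], [0, 0]] and let x = (0, 1). Define f(θ) := ‖T_θ² x‖, where T_θ := θ • T + (1 − θ) • id and T_θ² = T_θ ∘ T_θ. Then f(θ) = √(4θ²(1−θ)² + (1−θ)⁴) for all θ ∈ ℝ, and f is not convex on ℝ: indeed f(1/2) = √5/4 > 1/2 = (f(0) + f(1))/2. -/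
lemma relax_sq_norm_aux
    (T : EuclideanSpace ℝ (Fin 2) →ₗ[ℝ] EuclideanSpace ℝ (Fin 2))
    (hT : ∀ v : EuclideanSpace ℝ (Fin 2), T v = ![v 1, 0])
    (x : EuclideanSpace ℝ (Fin 2)) (hx : x = !₂[0, 1]) (θ : ℝ) :
        ‖((θ • T + (1 - θ) • LinearMap.id) ∘ₗ (θ • T + (1 - θ) • LinearMap.id)) x‖ =
          Real.sqrt (4 * θ ^ 2 * (1 - θ) ^ 2 + (1 - θ) ^ 4) := by
  have hTx : T (!₂[0, 1] : EuclideanSpace ℝ (Fin 2)) = !₂[1, 0] := by ext i; rw [hT]; fin_cases i <;> simp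
  have hTTx : T (!₂[1, 0] : EuclideanSpace ℝ (Fin 2)) = !₂[0, 0] := by ext i; rw [hT]; fin_cases i <;> simp
  rw [EuclideanSpace.norm_eq]
  congr 1
  rw [Fin.sum_univ_two]
  simp only [LinearMap.comp_apply, LinearMap.add_apply, LinearMap.smul_apply,
    LinearMap.id_apply, map_add, map_smul, hTTx, hTx, hx, PiLp.add_apply, PiLp.smul_apply,
    smul_eq_mul, Real.norm_eq_abs, sq_abs]
  simp [Matrix.cons_val_zero, Matrix.cons_val_one]
  ring

/-- Let `T : ℝ² → ℝ²` be given by the matrix `[[0, 1], [0, 0]]`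
(i.e. `T v = (v 1, 0)`) and `x = (0, 1)`. With `f θ := ‖(T_θ ∘ T_θ) x‖` where
`T_θ = θ • T + (1 - θ) • id`, one has `f θ = √(4θ²(1-θ)² + (1-θ)⁴)` for all `θ`,
`f` is not convex, and indeed `f(1/2) = √5/4 > 1/2 = (f 0 + f 1)/2`. -/
theorem not_convex_norm_relaxation_sq
    (T : EuclideanSpace ℝ (Fin 2) →ₗ[ℝ] EuclideanSpace ℝ (Fin 2))
    (hT : ∀ v : EuclideanSpace ℝ (Fin 2), T v = ![v 1, 0])
    (x : EuclideanSpace ℝ (Fin 2)) (hx : x = !₂[0, 1]) :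
    (∀ θ : ℝ,
        ‖((θ • T + (1 - θ) • LinearMap.id) ∘ₗ (θ • T + (1 - θ) • LinearMap.id)) x‖ =
          Real.sqrt (4 * θ ^ 2 * (1 - θ) ^ 2 + (1 - θ) ^ 4)) ∧
      ¬ ConvexOn ℝ Set.univ (fun θ : ℝ =>
        ‖((θ • T + (1 - θ) • LinearMap.id) ∘ₗ (θ • T + (1 - θ) • LinearMap.id)) x‖) ∧
      ‖(((1 / 2 : ℝ) • T + (1 - 1 / 2 : ℝ) • LinearMap.id) ∘ₗ
          ((1 / 2 : ℝ) • T + (1 - 1 / 2 : ℝ) • LinearMap.id)) x‖ = Real.sqrt 5 / 4 ∧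
      Real.sqrt 5 / 4 > 1 / 2 ∧
      (‖(((0 : ℝ) • T + (1 - 0 : ℝ) • LinearMap.id) ∘ₗ
            ((0 : ℝ) • T + (1 - 0 : ℝ) • LinearMap.id)) x‖ +
          ‖(((1 : ℝ) • T + (1 - 1 : ℝ) • LinearMap.id) ∘ₗ
            ((1 : ℝ) • T + (1 - 1 : ℝ) • LinearMap.id)) x‖) / 2 = 1 / 2 := by
  have key := relax_sq_norm_aux T hT x hx
  have e0 : Real.sqrt (4 * (0:ℝ)^2 * (1-0)^2 + (1-0)^4) = 1 := by norm_num
  have e1 : Real.sqrt (4 * (1:ℝ)^2 * (1-1)^2 + (1-1)^4) = 0 := by norm_num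
  have eh : Real.sqrt (4 * (1/2:ℝ)^2 * (1-1/2)^2 + (1-1/2)^4) = Real.sqrt 5 / 4 := by
    rw [show (4 * (1/2:ℝ)^2 * (1-1/2)^2 + (1-1/2)^4) = 5 * (1/4)^2 by norm_num,
      Real.sqrt_mul (by norm_num), Real.sqrt_sq (by norm_num)]
    ring
  have hgt : Real.sqrt 5 / 4 > 1 / 2 := by
    have : (2:ℝ) < Real.sqrt 5 := (Real.lt_sqrt (by norm_num)).mpr (by norm_num)
    linarith
  refine ⟨key, ?_, by rw [key]; exact eh, hgt, by rw [key, key, e0, e1]; norm_num⟩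
  intro hc
  have h2 := hc.2 (Set.mem_univ (0:ℝ)) (Set.mem_univ (1:ℝ))
    (by norm_num : (0:ℝ) ≤ 1/2) (by norm_num : (0:ℝ) ≤ 1/2) (by norm_num)
  simp only [smul_eq_mul] at h2
  rw [show (1/2 : ℝ) * (0:ℝ) + (1/2:ℝ) * (1:ℝ) = 1/2 by norm_num] at h2
  rw [key, key, key, e0, e1, eh] at h2
  linarith
end
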